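/- arXiv:math/0312048 — 2 statements merged into one kernel-verified Lean document; each statement's English description precedes it below -/
import Mathlib

section
/- Let n ≥ 1 and let A be an n×n real matrix with det A = 1 (i.e. A ∈ SL(n,ℝ)). Then ∫_{S^{n-1}} log ‖A u‖ dσ(u) ≥ 0, where σ is the uniform probability measure on the unit sphere S^{n-1} ⊂ ℝⁿ and ‖·‖ is the Euclidean norm. -/
open MeasureTheory Matrix Metric
open Set

/-- Borel measurable structure on real square matrices. -/
noncomputable instance matrixMeasurableSpace {n : ℕ} :
    MeasurableSpace (Matrix (Fin n) (Fin n) ℝ) := borel _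

instance matrixBorelSpace {n : ℕ} : BorelSpace (Matrix (Fin n) (Fin n) ℝ) := ⟨rfl⟩

/-- The spectral radius of a real square matrix: the maximum modulus of its complex
eigenvalues (elements of the spectrum of the matrix viewed over `ℂ`). -/
noncomputable def specRad {n : ℕ} (M : Matrix (Fin n) (Fin n) ℝ) : ℝ :=
  sSup ((fun z => ‖z‖) '' spectrum ℂ (M.map (fun x => (x : ℂ))))

/-- The ℓ²-operator norm of a real square matrix (equal to its largest singular value). -/
noncomputable def opNorm {n : ℕ} (M : Matrix (Fin n) (Fin n) ℝ) : ℝ :=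
  ‖Matrix.toEuclideanCLM (𝕜 := ℝ) M‖

/-- The uniform (rotation-invariant) probability measure on the unit sphere
`S^{n-1} ⊆ ℝⁿ`: the normalization of the spherical measure induced by Lebesgue measure. -/
noncomputable def uniSphere (n : ℕ) :
    Measure (sphere (0 : EuclideanSpace ℝ (Fin n)) 1) :=
  ((volume : Measure (EuclideanSpace ℝ (Fin n))).toSphere Set.univ)⁻¹ •
    (volume : Measure (EuclideanSpace ℝ (Fin n))).toSphere


lemma aux_log_int : IntegrableOn Real.log (Set.Ioo (0:ℝ) 1) volume := by
  have hdom : IntegrableOn (fun x : ℝ => 2 * x ^ (-(1/2) : ℝ)) (Set.Ioo 0 1) volume := by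
    have h := (intervalIntegral.intervalIntegrable_rpow' (a := 0) (b := 1)
      (r := -(1/2)) (by norm_num)).const_mul 2
    rw [intervalIntegrable_iff_integrableOn_Ioc_of_le zero_le_one] at h
    exact h.mono_set Set.Ioo_subset_Ioc_self
  refine hdom.integrable.mono' (Real.measurable_log.aestronglyMeasurable) ?_
  filter_upwards [ae_restrict_mem measurableSet_Ioo] with x hx
  have hx0 : 0 < x := hx.1
  have hx1 : x < 1 := hx.2
  have h1 : |Real.log x| = -Real.log x :=
    abs_of_nonpos (Real.log_nonpos hx0.le hx1.le)
  have h2 : -Real.log x = 2 * Real.log (x ^ (-(1/2) : ℝ)) := by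
    rw [Real.log_rpow hx0]; ring
  have h3 : Real.log (x ^ (-(1/2) : ℝ)) ≤ x ^ (-(1/2) : ℝ) := by
    have := Real.add_one_le_exp (Real.log (x ^ (-(1/2) : ℝ)))
    nlinarith [Real.exp_log (Real.rpow_pos_of_pos hx0 (-(1/2))),
      Real.rpow_pos_of_pos hx0 (-(1/2) : ℝ)]
  rw [Real.norm_eq_abs, h1, h2]
  linarith

lemma aux_pow_log_int (k : ℕ) :
    IntegrableOn (fun x : ℝ => Real.log x * x ^ k) (Set.Ioo (0:ℝ) 1) volume := by
  refine aux_log_int.integrable.abs.mono' ?_ ?_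
  · exact (Real.measurable_log.mul (measurable_id.pow_const k)).aestronglyMeasurable
  · filter_upwards [ae_restrict_mem measurableSet_Ioo] with x hx
    rw [Real.norm_eq_abs, abs_mul]
    have : |x ^ k| ≤ 1 := by
      rw [abs_pow]
      exact pow_le_one₀ (abs_nonneg x) (by rw [abs_of_pos hx.1]; exact hx.2.le)
    calc |Real.log x| * |x ^ k| ≤ |Real.log x| * 1 :=
          mul_le_mul_of_nonneg_left this (abs_nonneg _)
      _ = |Real.log x| := mul_one _

lemma aux_det_toEuclideanLin {n : ℕ} (A : Matrix (Fin n) (Fin n) ℝ) :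
    LinearMap.det (Matrix.toEuclideanLin (𝕜 := ℝ) A) = A.det := by
  have h : Matrix.toEuclideanLin (𝕜 := ℝ) A =
      (((WithLp.linearEquiv 2 ℝ (Fin n → ℝ)).symm :
          (Fin n → ℝ) →ₗ[ℝ] EuclideanSpace ℝ (Fin n)) ∘ₗ
        (Matrix.toLin' A) ∘ₗ
        (((WithLp.linearEquiv 2 ℝ (Fin n → ℝ)).symm.symm :
          EuclideanSpace ℝ (Fin n) →ₗ[ℝ] (Fin n → ℝ)))) := rfl
  rw [h, LinearMap.det_conj, LinearMap.det_toLin']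

set_option maxHeartbeats 1000000

/-- For `n ≥ 1` and `A ∈ SL(n,ℝ)`, the integral of `log ‖A u‖` over the
unit sphere with respect to the uniform probability measure is nonnegative. -/
theorem sphere_log_norm_integral_nonneg (n : ℕ) (hn : 1 ≤ n)
    (A : Matrix (Fin n) (Fin n) ℝ) (hA : A.det = 1) :
    0 ≤ ∫ u : sphere (0 : EuclideanSpace ℝ (Fin n)) 1,
        Real.log ‖(WithLp.equiv 2 (Fin n → ℝ)).symm (A.mulVec u)‖ ∂(uniSphere n) := by
  classical
  set E := EuclideanSpace ℝ (Fin n) with hE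
  haveI : Nonempty (Fin n) := ⟨⟨0, hn⟩⟩
  haveI : Nontrivial E := inferInstance
  set T : E →L[ℝ] E := Matrix.toEuclideanCLM (𝕜 := ℝ) A with hT
  set S : E →L[ℝ] E := Matrix.toEuclideanCLM (𝕜 := ℝ) A⁻¹ with hS
  have hAu : IsUnit A.det := by rw [hA]; exact isUnit_one
  have hST : ∀ x : E, S (T x) = x := by
    intro x
    have h1 : S * T = 1 := by
      rw [hS, hT, ← _root_.map_mul _ _ _, Matrix.nonsing_inv_mul A hAu, _root_.map_one _]
    calc S (T x) = (S * T) x := rfl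
      _ = x := by rw [h1]; rfl
  have hTS : ∀ x : E, T (S x) = x := by
    intro x
    have h1 : T * S = 1 := by
      rw [hS, hT, ← _root_.map_mul _ _ _, Matrix.mul_nonsing_inv A hAu, _root_.map_one _]
    calc T (S x) = (T * S) x := rfl
      _ = x := by rw [h1]; rfl
  have hT0 : ∀ u : E, u ≠ 0 → T u ≠ 0 := by
    intro u hu h0
    exact hu (by rw [← hST u, h0, map_zero])
  -- measure preservation
  have hdet : LinearMap.det ((T : E →ₗ[ℝ] E)) = 1 := by
    rw [hT, Matrix.coe_toEuclideanCLM_eq_toEuclideanLin, aux_det_toEuclideanLin, hA]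
  have hmap : Measure.map (⇑T) (volume : Measure E) = volume := by
    have h := Measure.map_linearMap_addHaar_eq_smul_addHaar (volume : Measure E)
      (f := (T : E →ₗ[ℝ] E)) (by rw [hdet]; norm_num)
    rw [hdet] at h
    simpa using h
  have hmp : MeasurePreserving (⇑T) (volume : Measure E) volume :=
    ⟨T.continuous.measurable, hmap⟩
  -- polar decomposition of the measure
  set σ' := (volume : Measure E).toSphere with hσ'
  have hfr : Module.finrank ℝ E = n := finrank_euclideanSpace_fin
  have m0 := (volume : Measure E).measurePreserving_homeomorphUnitSphereProd
  rw [hfr] at m0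
  set ν : Measure (Ioi (0:ℝ)) := Measure.volumeIoiPow (n - 1) with hν
  -- transfer lemmas
  have key : ∀ f : E → ℝ, (∫ x, f x ∂(volume : Measure E)) =
      ∫ p : sphere (0:E) 1 × Ioi (0:ℝ), f ((p.2 : ℝ) • (p.1 : E)) ∂(σ'.prod ν) := by
    intro f
    have h1 : (∫ x, f x ∂(volume : Measure E)) = ∫ x in ({(0:E)}ᶜ), f x ∂volume := by
      rw [restrict_compl_singleton]
    rw [h1, ← integral_subtype_comap (measurableSet_singleton (0:E)).compl f]
    have h2 := m0.integral_comp (Homeomorph.measurableEmbedding _)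
      (fun p : sphere (0:E) 1 × Ioi (0:ℝ) => f ((p.2 : ℝ) • (p.1 : E)))
    rw [← h2]
    refine integral_congr_ae (Filter.Eventually.of_forall fun x => ?_)
    have hx : x.1 ≠ 0 := x.2
    simp only [homeomorphUnitSphereProd_apply_snd_coe,
      homeomorphUnitSphereProd_apply_fst_coe]
    rw [smul_inv_smul₀ (norm_ne_zero_iff.2 hx)]
  have keyInt : ∀ f : E → ℝ,
      Integrable (fun p : sphere (0:E) 1 × Ioi (0:ℝ) => f ((p.2 : ℝ) • (p.1 : E)))
        (σ'.prod ν) → Integrable f (volume : Measure E) := by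
    intro f hf
    have h1 : Integrable (fun x : ({(0:E)}ᶜ : Set E) => f x)
        ((volume : Measure E).comap Subtype.val) := by
      have h2 := (m0.integrable_comp_emb (Homeomorph.measurableEmbedding _)
        (g := fun p : sphere (0:E) 1 × Ioi (0:ℝ) => f ((p.2 : ℝ) • (p.1 : E)))).2 hf
      refine h2.congr (Filter.Eventually.of_forall fun x => ?_)
      have hx : x.1 ≠ 0 := x.2
      simp only [Function.comp_apply, homeomorphUnitSphereProd_apply_snd_coe,
        homeomorphUnitSphereProd_apply_fst_coe]
      rw [smul_inv_smul₀ (norm_ne_zero_iff.2 hx)]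
    have h2 : Integrable f ((volume : Measure E).restrict {(0:E)}ᶜ) := by
      rw [← map_comap_subtype_coe (measurableSet_singleton (0:E)).compl]
      exact ((MeasurableEmbedding.subtype_coe
        (measurableSet_singleton (0:E)).compl).integrable_map_iff).2 h1
    rwa [restrict_compl_singleton] at h2
  -- integrability of the weight on (0,∞)
  set ψ : Ioi (0:ℝ) → ℝ := fun r => if (r:ℝ) < 1 then Real.log r else 0 with hψ
  have hψ_int : Integrable ψ ν := by
    rw [hν, Measure.volumeIoiPow]
    rw [integrable_withDensity_iff
      ((measurable_subtype_coe.pow_const _).ennreal_ofReal)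
      (Filter.Eventually.of_forall fun r => ENNReal.ofReal_lt_top)]
    have hcongr : (fun r : Ioi (0:ℝ) => ψ r * (ENNReal.ofReal ((r:ℝ)^(n-1))).toReal) =
        (fun x : ℝ => (if x < 1 then Real.log x else 0) * x^(n-1)) ∘ Subtype.val := by
      funext r
      have : (0:ℝ) ≤ (r:ℝ)^(n-1) := pow_nonneg (le_of_lt r.2) _
      simp [hψ, ENNReal.toReal_ofReal this]
    rw [hcongr, ← (MeasurableEmbedding.subtype_coe measurableSet_Ioi).integrable_map_iff,
      map_comap_subtype_coe measurableSet_Ioi]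
    have h1 : IntegrableOn (fun x : ℝ => (if x < 1 then Real.log x else 0) * x^(n-1))
        (Ioo (0:ℝ) 1) volume := by
      refine (aux_pow_log_int (n-1)).congr_fun (fun x hx => ?_) measurableSet_Ioo
      simp [hx.2]
    have h2 : IntegrableOn (fun x : ℝ => (if x < 1 then Real.log x else 0) * x^(n-1))
        (Ici (1:ℝ)) volume := by
      refine integrableOn_zero.congr_fun (fun x hx => ?_) measurableSet_Ici
      simp [not_lt.2 (Set.mem_Ici.mp hx)]
    exact (h1.union h2).mono_set fun x hx => (lt_or_ge x 1).imp (fun h => ⟨hx, h⟩) id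
  -- functions on E
  have hlogn : Measurable fun y : E => Real.log ‖y‖ :=
    Real.measurable_log.comp measurable_norm
  set w : E → ℝ := fun y => Set.indicator (ball (0:E) 1) (fun y => Real.log ‖y‖) y with hw
  set D : Set E := ⇑S ⁻¹' (ball (0:E) 1) with hD
  have hD_open : IsOpen D := isOpen_ball.preimage S.continuous
  have hDmem : ∀ x : E, T x ∈ D ↔ x ∈ ball (0:E) 1 := by
    intro x
    simp only [hD, Set.mem_preimage, hST x]
  set v : E → ℝ := fun y => Set.indicator D (fun y => Real.log ‖y‖) y with hv
  set k : E → ℝ := fun y => v y - w y with hk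
  have hw_meas : Measurable w := hlogn.indicator measurableSet_ball
  have hv_meas : Measurable v := hlogn.indicator hD_open.measurableSet
  have hk_meas : Measurable k := hv_meas.sub hw_meas
  -- w is integrable
  have hw_int : Integrable w (volume : Measure E) := by
    refine keyInt w ?_
    have heq : (fun p : sphere (0:E) 1 × Ioi (0:ℝ) => w ((p.2:ℝ) • (p.1:E))) =
        fun p => (fun _ : sphere (0:E) 1 => (1:ℝ)) p.1 * ψ p.2 := by
      funext p
      have hn1 : ‖(p.1 : E)‖ = 1 := mem_sphere_zero_iff_norm.1 p.1.2
      have hr : (0:ℝ) < p.2 := p.2.2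
      have hnorm : ‖(p.2:ℝ) • (p.1:E)‖ = (p.2:ℝ) := by
        rw [norm_smul, hn1, mul_one, Real.norm_eq_abs, abs_of_pos hr]
      by_cases hlt : (p.2:ℝ) < 1
      · have hmem : ((p.2:ℝ) • (p.1:E)) ∈ ball (0:E) 1 := by
          rw [mem_ball_zero_iff, hnorm]; exact hlt
        simp only [hw, indicator_of_mem hmem, hnorm, hψ, if_pos hlt, one_mul]
      · have hmem : ((p.2:ℝ) • (p.1:E)) ∉ ball (0:E) 1 := by
          rw [mem_ball_zero_iff, hnorm]; exact hlt
        simp only [hw, indicator_of_notMem hmem, hψ, if_neg hlt, mul_zero]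
    rw [heq]
    exact (integrable_const (1:ℝ)).mul_prod hψ_int
  -- k is nonnegative
  have hk_nonneg : ∀ y : E, 0 ≤ k y := by
    intro y
    simp only [hk, hv, hw]
    by_cases hyD : y ∈ D <;> by_cases hyB : y ∈ ball (0:E) 1
    · simp [indicator_of_mem hyD, indicator_of_mem hyB]
    · have h1 : (1:ℝ) ≤ ‖y‖ := not_lt.1 (fun h => hyB (mem_ball_zero_iff.2 h))
      simp only [indicator_of_mem hyD, indicator_of_notMem hyB, sub_zero]
      exact Real.log_nonneg h1
    · have h1 : ‖y‖ ≤ 1 := le_of_lt (mem_ball_zero_iff.1 hyB)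
      simp only [indicator_of_notMem hyD, indicator_of_mem hyB, zero_sub,
        neg_nonneg]
      exact Real.log_nonpos (norm_nonneg y) h1
    · simp [indicator_of_notMem hyD, indicator_of_notMem hyB]
  -- k is bounded with bounded support
  set C : ℝ := Real.log (‖T‖ + 1) + Real.log (‖S‖ + 1) with hC
  have hC1 : (0:ℝ) ≤ Real.log (‖T‖ + 1) :=
    Real.log_nonneg (by linarith [norm_nonneg T])
  have hC2 : (0:ℝ) ≤ Real.log (‖S‖ + 1) :=
    Real.log_nonneg (by linarith [norm_nonneg S])
  have hDsub : D ⊆ ball (0:E) (‖T‖ + 1) := by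
    intro y hy
    have h1 : ‖S y‖ < 1 := mem_ball_zero_iff.1 hy
    have h2 : ‖y‖ ≤ ‖T‖ * ‖S y‖ := by
      conv_lhs => rw [← hTS y]
      exact T.le_opNorm _
    rw [mem_ball_zero_iff]
    nlinarith [norm_nonneg (S y), norm_nonneg T]
  have hk_bound : ∀ y : E,
      |k y| ≤ Set.indicator (ball (0:E) (‖T‖ + 1)) (fun _ => C) y := by
    intro y
    by_cases hyR : y ∈ ball (0:E) (‖T‖ + 1)
    · rw [indicator_of_mem hyR]
      simp only [hk, hv, hw]
      by_cases hyD : y ∈ D <;> by_cases hyB : y ∈ ball (0:E) 1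
      · simp only [indicator_of_mem hyD, indicator_of_mem hyB, sub_self, abs_zero]
        rw [hC]; linarith
      · have h1 : (1:ℝ) ≤ ‖y‖ := not_lt.1 (fun h => hyB (mem_ball_zero_iff.2 h))
        have h2 : ‖y‖ < ‖T‖ + 1 := mem_ball_zero_iff.1 (hDsub hyD)
        simp only [indicator_of_mem hyD, indicator_of_notMem hyB, sub_zero]
        rw [abs_of_nonneg (Real.log_nonneg h1)]
        have := Real.log_le_log (by linarith) h2.le
        rw [hC]; linarith
      · have h1 : ‖y‖ < 1 := mem_ball_zero_iff.1 hyB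
        have h2 : (1:ℝ) ≤ ‖S y‖ := not_lt.1 (fun h => hyD (mem_ball_zero_iff.2 h))
        have h3 : ‖S y‖ ≤ ‖S‖ * ‖y‖ := S.le_opNorm y
        have hy0 : (0:ℝ) < ‖y‖ := by
          rcases lt_or_ge 0 ‖y‖ with h | h
          · exact h
          · exfalso
            have : ‖y‖ = 0 := le_antisymm h (norm_nonneg y)
            rw [this, mul_zero] at h3; linarith
        have h4 : (1:ℝ) ≤ (‖S‖ + 1) * ‖y‖ := by nlinarith [norm_nonneg S]
        have h5 : 0 ≤ Real.log ((‖S‖ + 1) * ‖y‖) := Real.log_nonneg h4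
        rw [Real.log_mul (by nlinarith [norm_nonneg S]) (ne_of_gt hy0)] at h5
        simp only [indicator_of_notMem hyD, indicator_of_mem hyB, zero_sub, abs_neg]
        rw [abs_of_nonpos (Real.log_nonpos (norm_nonneg y) h1.le)]
        rw [hC]; linarith
      · simp only [indicator_of_notMem hyD, indicator_of_notMem hyB, sub_self,
          abs_zero]
        rw [hC]; linarith
    · rw [indicator_of_notMem hyR]
      have hyD : y ∉ D := fun h => hyR (hDsub h)
      have hyB : y ∉ ball (0:E) 1 := by
        intro h
        exact hyR (mem_ball_zero_iff.2 (by
          have := mem_ball_zero_iff.1 h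
          nlinarith [norm_nonneg T]))
      simp [hk, hv, hw, indicator_of_notMem hyD, indicator_of_notMem hyB]
  have hk_int : Integrable k (volume : Measure E) := by
    have hbd : Integrable (Set.indicator (ball (0:E) (‖T‖ + 1)) (fun _ => C))
        (volume : Measure E) :=
      (integrable_indicator_iff measurableSet_ball).2
        (integrableOn_const measure_ball_lt_top.ne)
    exact hbd.mono' hk_meas.aestronglyMeasurable
      (Filter.Eventually.of_forall fun y => by
        rw [Real.norm_eq_abs]; exact hk_bound y)
  have hv_int : Integrable v (volume : Measure E) := by
    have : v = fun y => k y + w y := by funext y; simp [hk]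
    rw [this]
    exact hk_int.add hw_int
  -- change of variables x ↦ T x
  have hvT_asm : AEStronglyMeasurable v (Measure.map (⇑T) (volume : Measure E)) := by
    rw [hmap]; exact hv_meas.aestronglyMeasurable
  have hvT_int : Integrable (fun x => v (T x)) (volume : Measure E) :=
    (integrable_map_measure hvT_asm hmp.measurable.aemeasurable).1
      (by rw [hmap]; exact hv_int)
  have h_int_vT : ∫ x, v (T x) ∂(volume : Measure E) = ∫ y, v y ∂(volume : Measure E) := by
    calc ∫ x, v (T x) ∂(volume : Measure E)
        = ∫ y, v y ∂(Measure.map (⇑T) (volume : Measure E)) :=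
          (integral_map hmp.measurable.aemeasurable hvT_asm).symm
      _ = ∫ y, v y ∂(volume : Measure E) := by rw [hmap]
  -- the key function h
  set h : E → ℝ := fun x =>
    Set.indicator (ball (0:E) 1) (fun x => Real.log ‖T x‖ - Real.log ‖x‖) x with hh
  have hh_eq : h = fun x => v (T x) - w x := by
    funext x
    by_cases hx : x ∈ ball (0:E) 1
    · have hTx : T x ∈ D := (hDmem x).2 hx
      simp only [hh, hv, hw, indicator_of_mem hx, indicator_of_mem hTx]
    · have hTx : T x ∉ D := fun hc => hx ((hDmem x).1 hc)
      simp only [hh, hv, hw, indicator_of_notMem hx, indicator_of_notMem hTx, sub_zero]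
  have step1 : 0 ≤ ∫ x, h x ∂(volume : Measure E) := by
    rw [hh_eq, integral_sub hvT_int hw_int, h_int_vT, ← integral_sub hv_int hw_int]
    exact integral_nonneg fun y => hk_nonneg y
  -- product representation of ∫ h
  set φ : sphere (0:E) 1 → ℝ := fun u => Real.log ‖T (u : E)‖ with hφ
  set g : Ioi (0:ℝ) → ℝ := fun r => if (r:ℝ) < 1 then (1:ℝ) else 0 with hg
  have step2 : ∫ x, h x ∂(volume : Measure E) = (∫ u, φ u ∂σ') * ∫ r, g r ∂ν := by
    rw [key h]
    have heq : (fun p : sphere (0:E) 1 × Ioi (0:ℝ) => h ((p.2:ℝ) • (p.1:E))) =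
        fun p => φ p.1 * g p.2 := by
      funext p
      have hu0 : (p.1 : E) ≠ 0 := ne_of_mem_sphere p.1.2 one_ne_zero
      have hn1 : ‖(p.1 : E)‖ = 1 := mem_sphere_zero_iff_norm.1 p.1.2
      have hr : (0:ℝ) < p.2 := p.2.2
      have hnorm : ‖(p.2:ℝ) • (p.1:E)‖ = (p.2:ℝ) := by
        rw [norm_smul, hn1, mul_one, Real.norm_eq_abs, abs_of_pos hr]
      have hTsmul : T ((p.2:ℝ) • (p.1:E)) = (p.2:ℝ) • T (p.1:E) := map_smul T _ _
      have hTu : T (p.1:E) ≠ 0 := hT0 _ hu0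
      by_cases hlt : (p.2:ℝ) < 1
      · have hmem : ((p.2:ℝ) • (p.1:E)) ∈ ball (0:E) 1 := by
          rw [mem_ball_zero_iff, hnorm]; exact hlt
        simp only [hh, indicator_of_mem hmem, hφ, hg, if_pos hlt, mul_one]
        rw [hTsmul, norm_smul, Real.norm_eq_abs, abs_of_pos hr,
          Real.log_mul (ne_of_gt hr) (norm_ne_zero_iff.2 hTu), hnorm]
        ring
      · have hmem : ((p.2:ℝ) • (p.1:E)) ∉ ball (0:E) 1 := by
          rw [mem_ball_zero_iff, hnorm]; exact hlt
        simp only [hh, indicator_of_notMem hmem, hφ, hg, if_neg hlt, mul_zero]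
    rw [heq, integral_prod_mul]
  have step3 : ∫ r, g r ∂ν = 1 / (n:ℝ) := by
    have hgeq : g = Set.indicator (Iio (⟨1, Set.mem_Ioi.2 one_pos⟩ : Ioi (0:ℝ)))
        (fun _ => (1:ℝ)) := by
      funext r
      have hmem : r ∈ Iio (⟨1, Set.mem_Ioi.2 one_pos⟩ : Ioi (0:ℝ)) ↔ (r:ℝ) < 1 := by
        rw [Set.mem_Iio, ← Subtype.coe_lt_coe]
      by_cases hlt : (r:ℝ) < 1
      · rw [indicator_of_mem (hmem.2 hlt)]
        simp only [hg, if_pos hlt]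
      · rw [indicator_of_notMem (fun hc => hlt (hmem.1 hc))]
        simp only [hg, if_neg hlt]
    rw [hgeq, integral_indicator_const (1:ℝ) measurableSet_Iio, hν, measureReal_def,
      Measure.volumeIoiPow_apply_Iio, smul_eq_mul, mul_one]
    have h2 : ((n - 1 : ℕ) : ℝ) + 1 = (n : ℝ) := by
      rw [Nat.cast_sub hn]; push_cast; ring
    rw [show ((⟨1, Set.mem_Ioi.2 one_pos⟩ : Ioi (0:ℝ)) : ℝ) = 1 from rfl, h2, one_pow,
      ENNReal.toReal_ofReal (by positivity)]
  have hI : 0 ≤ ∫ u, φ u ∂σ' := by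
    rw [step2, step3] at step1
    have hc : (0:ℝ) < 1 / n := by
      have : (0:ℝ) < n := by exact_mod_cast hn
      positivity
    by_contra hneg
    push_neg at hneg
    nlinarith
  -- conclusion
  have hintegrand : (fun u : sphere (0:E) 1 =>
      Real.log ‖(WithLp.equiv 2 (Fin n → ℝ)).symm (A.mulVec (u : E))‖) = φ := by
    funext u
    rw [hφ]
    congr 1
  show 0 ≤ ∫ u : sphere (0:E) 1,
      Real.log ‖(WithLp.equiv 2 (Fin n → ℝ)).symm (A.mulVec (u : E))‖ ∂(uniSphere n)
  rw [uniSphere, integral_smul_measure, hintegrand]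
  exact mul_nonneg ENNReal.toReal_nonneg hI
end

section
/- Let a > 0, let A = diag(a, 1/a), set t = (a + 1/a)/2, and let R_θ be the 2×2 rotation matrix with angle θ, R_θ = [[cos θ, sin θ], [−sin θ, cos θ]]. If |cos θ| < 1/t, then ρ(A R_θ) = 1, where ρ denotes the spectral radius; in other words, the matrix A R_θ is elliptic. -/
open Matrix Real

lemma det_aux (a c s' r s : ℝ) (ha : (0:ℝ) < a)
    (hpyth : s' ^ 2 + c ^ 2 = 1) (hs2 : s ^ 2 = 1 - r ^ 2)
    (hr : r * 2 = (a + 1/a) * c) (z : ℂ) :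
    (algebraMap ℂ (Matrix (Fin 2) (Fin 2) ℂ) z -
        !![(a:ℂ) * c, (a:ℂ) * s';
           -((1/a : ℝ):ℂ) * s', ((1/a : ℝ):ℂ) * c]).det
      = (z - ((r:ℂ) + s * Complex.I)) * (z - ((r:ℂ) - s * Complex.I)) := by
  have haC : (a:ℂ) ≠ 0 := by exact_mod_cast ha.ne'
  have hpythc : (s':ℂ)^2 + (c:ℂ)^2 = 1 := by exact_mod_cast hpyth
  have hsc : (s:ℂ)^2 = 1 - (r:ℂ)^2 := by exact_mod_cast hs2
  have hrc : (r:ℂ) * 2 * a = ((a:ℂ)^2 + 1) * c := by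
    have : (r * 2 * a : ℝ) = (a^2 + 1) * c := by field_simp at hr ⊢; linarith [hr]
    exact_mod_cast this
  rw [Matrix.det_fin_two]
  simp only [Matrix.algebraMap_eq_diagonal, Matrix.sub_apply, Matrix.diagonal_apply,
    Matrix.cons_val', Matrix.cons_val_zero, Matrix.cons_val_one, Matrix.head_cons,
    Matrix.head_fin_const, Matrix.empty_val', Matrix.cons_val_fin_one, Pi.algebraMap_apply,
    Matrix.of_apply, Algebra.algebraMap_self, RingHom.id_apply]
  push_cast
  field_simp
  linear_combination (a:ℂ) * (s:ℂ)^2 * Complex.I_sq - (a:ℂ) * hsc + (a:ℂ) * hpythc + z * hrc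

/-- Let `a > 0`, `A = diag (a, 1/a)`, `t = (a + 1/a)/2` and let `R_θ`
be the rotation by angle `θ`.  If `|cos θ| < 1/t` then `ρ(A R_θ) = 1` (the matrix
`A R_θ` is elliptic). -/
theorem specRad_eq_one_of_abs_cos_lt (a θ : ℝ) (ha : 0 < a)
    (h : |Real.cos θ| < 1 / ((a + 1 / a) / 2)) :
    specRad (!![a, 0; 0, 1 / a] *
      !![Real.cos θ, Real.sin θ; -Real.sin θ, Real.cos θ]) = 1 := by
  have ht : (0:ℝ) < (a + 1 / a) / 2 := by positivity
  set t : ℝ := (a + 1 / a) / 2 with htdef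
  set r : ℝ := t * Real.cos θ with hrdef
  have hr1 : |r| < 1 := by
    have h' := (lt_div_iff₀ ht).mp h
    calc |r| = |Real.cos θ| * t := by rw [hrdef, abs_mul, abs_of_pos ht, mul_comm]
    _ < 1 := h'
  have hr2 : r ^ 2 < 1 := by nlinarith [sq_abs r, abs_nonneg r]
  set s : ℝ := Real.sqrt (1 - r ^ 2) with hsdef
  have hs2 : s ^ 2 = 1 - r ^ 2 := Real.sq_sqrt (by linarith)
  set z₁ : ℂ := (r:ℂ) + s * Complex.I with hz1
  set z₂ : ℂ := (r:ℂ) - s * Complex.I with hz2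
  have habs1 : ‖z₁‖ = 1 := by
    have hsq : ‖z₁‖ ^ 2 = 1 := by
      rw [Complex.sq_norm]
      simp [Complex.normSq_apply, hz1]
      nlinarith
    nlinarith [norm_nonneg z₁, hsq]
  have habs2 : ‖z₂‖ = 1 := by
    have hsq : ‖z₂‖ ^ 2 = 1 := by
      rw [Complex.sq_norm]
      simp [Complex.normSq_apply, hz2]
      nlinarith
    nlinarith [norm_nonneg z₂, hsq]
  have hMc : (( !![a, 0; 0, 1 / a] *
      !![Real.cos θ, Real.sin θ; -Real.sin θ, Real.cos θ]).map (fun x => (x : ℂ)))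
      = !![(a:ℂ) * Real.cos θ, (a:ℂ) * Real.sin θ;
           -((1/a : ℝ):ℂ) * Real.sin θ, ((1/a : ℝ):ℂ) * Real.cos θ] := by
    ext i j
    fin_cases i <;> fin_cases j <;>
      simp [Matrix.mul_apply, Fin.sum_univ_two, Matrix.map_apply] <;> push_cast <;> ring
  have hspec : spectrum ℂ (( !![a, 0; 0, 1 / a] *
      !![Real.cos θ, Real.sin θ; -Real.sin θ, Real.cos θ]).map (fun x => (x : ℂ)))
      = {z₁, z₂} := by
    rw [hMc]
    ext z
    rw [spectrum.mem_iff, Matrix.isUnit_iff_isUnit_det, isUnit_iff_ne_zero, not_ne_iff]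
    rw [det_aux a (Real.cos θ) (Real.sin θ) r s ha (Real.sin_sq_add_cos_sq θ) hs2
      (by rw [hrdef, htdef]; ring) z]
    rw [mul_eq_zero, sub_eq_zero, sub_eq_zero]
    simp [Set.mem_insert_iff, hz1, hz2]
  show sSup _ = 1
  rw [hspec]
  have himg : (fun z => ‖z‖) '' {z₁, z₂} = {1} := by
    rw [Set.image_pair, habs1, habs2, Set.pair_eq_singleton]
  rw [himg, csSup_singleton]
end
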